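/- Let n ≥ 2, m ≥ 1, and for each α ∈ Fin m let A^α be a real symmetric n × n matrix. Set H² := (1/n²) ∑_α (trace A^α)² and s := ∑_α ∑_{i,j} (A^α i j)². Then ∑_α [ (trace A^α)(A^α 0 0) − ∑_j (A^α 0 j)² ] ≤ (n²/4) H². -/

import Mathlib

/-! Since `(A α 0 0)²` is one of the terms of `∑ j, (A α 0 j)²`, each summand is at most
`t a - a² ≤ t² / 4` with `t = tr A^α` and `a = A^α 0 0`; summing over `α` gives `(n² / 4) H²`. -/

lemma mul_sub_le_sq_div_four {t a b : ℝ} (h : a ^ 2 ≤ b) : t * a - b ≤ t ^ 2 / 4 := by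
  nlinarith [sq_nonneg (t - 2 * a)]

lemma Matrix.trace_mul_diag_sub_sum_sq_row_le {ι : Type*} [Fintype ι]
    (M : Matrix ι ι ℝ) (i : ι) :
    M.trace * M i i - ∑ j, M i j ^ 2 ≤ M.trace ^ 2 / 4 :=
  mul_sub_le_sq_div_four <|
    Finset.single_le_sum (f := fun j => M i j ^ 2) (fun j _ => sq_nonneg (M i j))
      (Finset.mem_univ i)

theorem stmt_12 (n m : ℕ) (hn : 2 ≤ n)
    (A : Fin m → Matrix (Fin n) (Fin n) ℝ)
    (H2 : ℝ)
    (hH2 : H2 = (1 / (n : ℝ) ^ 2) * ∑ α, (Matrix.trace (A α)) ^ 2) :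
    ∑ α, (Matrix.trace (A α) * A α ⟨0, by omega⟩ ⟨0, by omega⟩
        - ∑ j, (A α ⟨0, by omega⟩ j) ^ 2)
      ≤ ((n : ℝ) ^ 2 / 4) * H2 := by
  have hn0 : (n : ℝ) ≠ 0 := by positivity
  calc _ ≤ ∑ α, Matrix.trace (A α) ^ 2 / 4 :=
        Finset.sum_le_sum fun α _ => (A α).trace_mul_diag_sub_sum_sq_row_le _
    _ = ((n : ℝ) ^ 2 / 4) * H2 := by
        rw [hH2, ← Finset.sum_div]
        field_simp
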